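/- Let 0 < a < 1 and let x₀ ∈ (a,1) satisfy F_a(x₀) < min{0, (1−2a)/12} (i.e. F_a(x₀) < min{F_a(0), F_a(1)}). Then the solution of x″ = x(x−1)(x−a) with initial conditions x(0) = x₀, x′(0) = 0 is a nonconstant periodic solution (its orbit is a closed cycle around the equilibrium (a,0)). -/

import Mathlib

open Filter Set

noncomputable section

/-- The potential `F_a(x) = -x⁴/4 + (1+a)x³/3 - a x²/2`. -/
def Fa (a x : ℝ) : ℝ := -x ^ 4 / 4 + (1 + a) * x ^ 3 / 3 - a * x ^ 2 / 2

/-- `x` is a (C²) solution of the autonomous equation `x'' = x(x-1)(x-a)`,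
with derivative `dx`. -/
def IsAutSol (a : ℝ) (x dx : ℝ → ℝ) : Prop :=
  (∀ t : ℝ, HasDerivAt x (dx t) t) ∧
  (∀ t : ℝ, HasDerivAt dx (x t * (x t - 1) * (x t - a)) t)

/-!
The energy `dx ^ 2 / 2 + Fa a x` is conserved. Its level `Fa a x₀` lies below both `Fa a 0` and
`Fa a 1`, so the orbit is trapped in the well `0 < x < 1` and stays bounded; this gives global
existence (through a cut-off vector field) and uniqueness. The velocity vanishes again at some
`c > 0`: otherwise `x` decreases to a limit which, by the mean value theorem, is an equilibrium at
the same energy, whereas `Fa` is larger at `0` and `1` and smaller at `a`. By reversibility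
(`t ↦ 2 c - t`) the solution is symmetric about both turning points `0` and `c`, hence
`2 c`-periodic, and it is not constant since `x₀` is not an equilibrium.
-/

open Topology

section GlobalSolutions

variable {E : Type*} [NormedAddCommGroup E] [NormedSpace ℝ E] [CompleteSpace E]

theorem exists_forall_mem_Ioo_hasDerivAt_of_lipschitzWith {F : E → E} {K : NNReal} {C : ℝ}
    (hK : LipschitzWith K F) (hC : ∀ p, ‖F p‖ ≤ C) (p₀ : E) {T : ℝ} (hT : 0 < T) :
    ∃ γ : ℝ → E, γ 0 = p₀ ∧ ∀ t ∈ Ioo (-T) T, HasDerivAt γ (F (γ t)) t := by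
  have hC0 : 0 ≤ C := (norm_nonneg _).trans (hC p₀)
  have hPL : IsPicardLindelof (fun _ => F) (tmin := -T) (tmax := T)
      ⟨0, by constructor <;> linarith⟩ p₀ ⟨C * T, by positivity⟩ 0 ⟨C, hC0⟩ K :=
    IsPicardLindelof.of_time_independent (fun p _ => hC p) hK.lipschitzOnWith (by simp; rfl)
  obtain ⟨γ, hγ0, hγ⟩ := hPL.exists_eq_forall_mem_Icc_hasDerivWithinAt₀
  exact ⟨γ, hγ0, fun t ht => (hγ t (Ioo_subset_Icc_self ht)).hasDerivAt (Icc_mem_nhds ht.1 ht.2)⟩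

/-- The local solutions `γ s` on `(-(|s| + 1), |s| + 1)` agree on common domains, so `t ↦ γ t t`
is a global solution. -/
theorem exists_forall_hasDerivAt_of_lipschitzWith {F : E → E} {K : NNReal} {C : ℝ}
    (hK : LipschitzWith K F) (hC : ∀ p, ‖F p‖ ≤ C) (p₀ : E) :
    ∃ γ : ℝ → E, γ 0 = p₀ ∧ ∀ t, HasDerivAt γ (F (γ t)) t := by
  choose γ hγ0 hγ using fun s : ℝ =>
    exists_forall_mem_Ioo_hasDerivAt_of_lipschitzWith hK hC p₀ (T := |s| + 1) (by positivity)
  have agree : ∀ s t, |t| < |s| + 1 → γ t t = γ s t := by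
    intro s t hts
    set T := min (|s| + 1) (|t| + 1)
    have hT : 0 < T := lt_min (by positivity) (by positivity)
    have hsub : ∀ r, T ≤ |r| + 1 → Ioo (-T) T ⊆ Ioo (-(|r| + 1)) (|r| + 1) := fun r h =>
      Ioo_subset_Ioo (neg_le_neg h) h
    exact ODE_solution_unique_of_mem_Ioo (v := fun _ => F) (s := fun _ => univ)
      (fun _ _ => hK.lipschitzOnWith) (t₀ := 0) ⟨neg_neg_of_pos hT, hT⟩
      (fun u hu => ⟨hγ t u (hsub t (min_le_right _ _) hu), trivial⟩)
      (fun u hu => ⟨hγ s u (hsub s (min_le_left _ _) hu), trivial⟩) (by rw [hγ0, hγ0])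
      (abs_lt.mp (lt_min hts (lt_add_one _)))
  refine ⟨fun t => γ t t, hγ0 0, fun t => ?_⟩
  have hmem : t ∈ Ioo (-(|t| + 1)) (|t| + 1) := abs_lt.mp (lt_add_one _)
  refine (hγ t t hmem).congr_of_eventuallyEq ?_
  filter_upwards [Ioo_mem_nhds hmem.1 hmem.2] with u hu using agree t u (abs_lt.mpr hu)

theorem exists_forall_hasDerivAt_of_hasCompactSupport [FiniteDimensional ℝ E] {F : E → E}
    (hF : ContDiff ℝ 1 F) (hsupp : HasCompactSupport F) (p₀ : E) :
    ∃ γ : ℝ → E, γ 0 = p₀ ∧ ∀ t, HasDerivAt γ (F (γ t)) t := by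
  obtain ⟨K, hK⟩ := hF.lipschitzWith_of_hasCompactSupport hsupp one_ne_zero
  obtain ⟨C, hC⟩ := hsupp.exists_bound_of_continuous hF.continuous
  exact exists_forall_hasDerivAt_of_lipschitzWith hK hC p₀

end GlobalSolutions

theorem HasDerivAt.eventually_nhdsGT_lt {f : ℝ → ℝ} {f' x : ℝ} (hf : HasDerivAt f f' x)
    (hf' : f' < 0) : ∀ᶠ y in 𝓝[>] x, f y < f x := by
  have hslope : ∀ᶠ y in 𝓝[>] x, slope f x y < 0 :=
    ((hasDerivAt_iff_tendsto_slope.mp hf).mono_left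
      (nhdsWithin_mono _ fun _ hy => ne_of_gt hy)).eventually_lt_const hf'
  filter_upwards [hslope, self_mem_nhdsWithin] with y hy hxy
  rw [slope_def_field, div_neg_iff] at hy
  rcases hy with ⟨-, hyx⟩ | ⟨hfy, -⟩
  · exact absurd hxy (not_lt.mpr (sub_neg.mp hyx).le)
  · exact sub_neg.mp hfy

theorem Continuous.neg_of_eventually_neg_of_ne_zero {f : ℝ → ℝ} {x : ℝ} (hf : Continuous f)
    (hneg : ∀ᶠ y in 𝓝[>] x, f y < 0) (hne : ∀ y, x < y → f y ≠ 0) {y : ℝ} (hy : x < y) :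
    f y < 0 := by
  refine lt_of_le_of_ne (not_lt.mp fun hfy => ?_) (hne y hy)
  obtain ⟨s, hs, hxs, hsy⟩ := (hneg.and (Ioo_mem_nhdsGT hy)).exists
  obtain ⟨u, hu, hu0⟩ := intermediate_value_Icc hsy.le hf.continuousOn ⟨hs.le, hfy.le⟩
  exact hne u (hxs.trans_le hu.1) hu0

/-- Mean value theorem on `[t, t + 1]`: `f'` takes values tending to `0` at times tending
to infinity. -/
theorem apply_zero_eq_of_tendsto_comp_deriv {f f' φ : ℝ → ℝ} {L m : ℝ}
    (hf : ∀ t, HasDerivAt f (f' t) t) (hφ : ContinuousAt φ 0)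
    (hfL : Tendsto f atTop (𝓝 L)) (hφm : Tendsto (fun t => φ (f' t)) atTop (𝓝 m)) :
    φ 0 = m := by
  have hmvt : ∀ t, ∃ ξ ∈ Ioo t (t + 1), f' ξ = (f (t + 1) - f t) / (t + 1 - t) := fun t =>
    exists_hasDerivAt_eq_slope f f' (lt_add_one t)
      (HasDerivAt.continuousOn fun s _ => hf s) fun s _ => hf s
  choose ξ hξ hf'ξ using hmvt
  have hξ_tendsto : Tendsto ξ atTop atTop := tendsto_atTop_mono (fun t => (hξ t).1.le) tendsto_id
  have hf'ξ_tendsto : Tendsto (fun t => f' (ξ t)) atTop (𝓝 0) := by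
    simp only [hf'ξ, add_sub_cancel_left, div_one]
    simpa using (hfL.comp (tendsto_atTop_add_const_right _ 1 tendsto_id)).sub hfL
  exact tendsto_nhds_unique (hφ.tendsto.comp hf'ξ_tendsto) (hφm.comp hξ_tendsto)

theorem AntitoneOn.exists_tendsto_atTop {f : ℝ → ℝ} {a b : ℝ} (hf : AntitoneOn f (Ici a))
    (hb : ∀ t ∈ Ici a, b ≤ f t) : ∃ L, Tendsto f atTop (𝓝 L) := by
  have hanti : Antitone fun t : Ici a => f t := fun s t hst => hf s.2 t.2 hst
  exact ⟨_, tendsto_comp_val_Ici_atTop.mp (tendsto_atTop_ciInf hanti ⟨b, by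
    rintro _ ⟨t, rfl⟩; exact hb t t.2⟩)⟩

theorem Fa_zero (a : ℝ) : Fa a 0 = 0 := by simp [Fa]

theorem Fa_one (a : ℝ) : Fa a 1 = (1 - 2 * a) / 12 := by simp only [Fa]; ring

theorem hasDerivAt_Fa (a y : ℝ) : HasDerivAt (Fa a) (y * (1 - y) * (y - a)) y :=
  ((((hasDerivAt_pow 4 y).fun_neg.div_const 4).fun_add
      (((hasDerivAt_pow 3 y).const_mul (1 + a)).div_const 3)).fun_sub
      (((hasDerivAt_pow 2 y).const_mul a).div_const 2)).congr_deriv (by push_cast; ring)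

theorem continuous_Fa (a : ℝ) : Continuous (Fa a) := by unfold Fa; fun_prop

theorem strictMonoOn_Fa {a : ℝ} (ha : 0 ≤ a) : StrictMonoOn (Fa a) (Icc a 1) := by
  refine strictMonoOn_of_deriv_pos (convex_Icc a 1) (continuous_Fa a).continuousOn fun y hy => ?_
  rw [interior_Icc] at hy
  rw [(hasDerivAt_Fa a y).deriv]
  exact mul_pos (mul_pos (ha.trans_lt hy.1) (sub_pos.mpr hy.2)) (sub_pos.mpr hy.1)

theorem energy_eq_of_hasDerivAt {a : ℝ} {x y c : ℝ → ℝ} (hx : ∀ t, HasDerivAt x (c t * y t) t)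
    (hy : ∀ t, HasDerivAt y (c t * (x t * (x t - 1) * (x t - a))) t) (t : ℝ) :
    y t ^ 2 / 2 + Fa a (x t) = y 0 ^ 2 / 2 + Fa a (x 0) := by
  have hE : ∀ s, HasDerivAt (fun t => y t ^ 2 / 2 + Fa a (x t)) 0 s := fun s =>
    ((((hy s).fun_pow 2).div_const 2).fun_add ((hasDerivAt_Fa a (x s)).comp s (hx s))).congr_deriv
      (by push_cast; ring)
  exact is_const_of_deriv_eq_zero (fun s => (hE s).differentiableAt) (fun s => (hE s).deriv) t 0

/-- `x` cannot cross `0` or `1`, where the potential exceeds the energy. -/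
theorem mem_Ioo_of_energy_eq {a : ℝ} {x y : ℝ → ℝ} (hx : Continuous x)
    (hE : ∀ t, y t ^ 2 / 2 + Fa a (x t) = Fa a (x 0)) (hx0 : x 0 ∈ Ioo 0 1)
    (hF0 : Fa a (x 0) < Fa a 0) (hF1 : Fa a (x 0) < Fa a 1) (t : ℝ) : x t ∈ Ioo 0 1 := by
  have hne : ∀ b, Fa a (x 0) < Fa a b → ∀ s, x s ≠ b := fun b hb s hs => by
    nlinarith [hE s, sq_nonneg (y s), hs ▸ hb]
  constructor
  · by_contra! hxt
    obtain ⟨s, hs⟩ := intermediate_value_univ t 0 hx ⟨hxt, hx0.1.le⟩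
    exact hne 0 hF0 s hs
  · by_contra! hxt
    obtain ⟨s, hs⟩ := intermediate_value_univ 0 t hx ⟨hx0.2.le, hxt⟩
    exact hne 1 hF1 s hs

theorem norm_le_two_of_energy_nonpos {a x y : ℝ} (h0 : 0 ≤ a) (h1 : a ≤ 1) (hx : x ∈ Ioo 0 1)
    (hE : y ^ 2 / 2 + Fa a x ≤ 0) : ‖(x, y)‖ ≤ 2 := by
  have hy : y ^ 2 ≤ 2 ^ 2 := by
    simp only [Fa] at hE
    nlinarith [hx.1, hx.2, mul_nonneg h0 (sq_nonneg x), pow_pos hx.1 3,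
      pow_le_one₀ (n := 4) hx.1.le hx.2.le]
  rw [Prod.norm_def, Real.norm_eq_abs, Real.norm_eq_abs]
  exact max_le (abs_le.mpr ⟨by linarith [hx.1], by linarith [hx.2]⟩)
    (abs_le.mpr (abs_le_of_sq_le_sq' hy two_pos.le))

theorem norm_le_two_of_energy_eq {a : ℝ} {x y : ℝ → ℝ} (h0 : 0 ≤ a) (h1 : a ≤ 1)
    (hx : Continuous x) (hE : ∀ t, y t ^ 2 / 2 + Fa a (x t) = Fa a (x 0)) (hx0 : x 0 ∈ Ioo 0 1)
    (hF0 : Fa a (x 0) < Fa a 0) (hF1 : Fa a (x 0) < Fa a 1) (t : ℝ) : ‖(x t, y t)‖ ≤ 2 :=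
  norm_le_two_of_energy_nonpos h0 h1 (mem_Ioo_of_energy_eq hx hE hx0 hF0 hF1 t)
    ((hE t).trans_le (hF0.le.trans_eq (Fa_zero a)))

def vectorField (a : ℝ) (p : ℝ × ℝ) : ℝ × ℝ := (p.2, p.1 * (p.1 - 1) * (p.1 - a))

theorem contDiff_vectorField (a : ℝ) : ContDiff ℝ 1 (vectorField a) := by
  unfold vectorField; fun_prop

namespace IsAutSol

variable {a : ℝ} {x dx : ℝ → ℝ}

theorem continuous (h : IsAutSol a x dx) : Continuous x :=
  continuous_iff_continuousAt.mpr fun t => (h.1 t).continuousAt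

theorem energy_eq (h : IsAutSol a x dx) (t : ℝ) :
    dx t ^ 2 / 2 + Fa a (x t) = dx 0 ^ 2 / 2 + Fa a (x 0) :=
  energy_eq_of_hasDerivAt (c := 1) (fun t => by simpa using h.1 t) (fun t => by simpa using h.2 t) t

theorem hasDerivAt_prod (h : IsAutSol a x dx) (t : ℝ) :
    HasDerivAt (fun t => (x t, dx t)) (vectorField a (x t, dx t)) t :=
  (h.1 t).prodMk (h.2 t)

theorem unique {x' dx' : ℝ → ℝ} {R t₀ : ℝ} (h : IsAutSol a x dx) (h' : IsAutSol a x' dx')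
    (hR : ∀ t, ‖(x t, dx t)‖ ≤ R) (hR' : ∀ t, ‖(x' t, dx' t)‖ ≤ R)
    (hx : x t₀ = x' t₀) (hdx : dx t₀ = dx' t₀) : x = x' := by
  obtain ⟨K, hK⟩ := (contDiff_vectorField a).contDiffOn.exists_lipschitzOnWith one_ne_zero
    (convex_closedBall 0 R) (isCompact_closedBall 0 R)
  have := ODE_solution_unique_univ (v := fun _ => vectorField a)
    (s := fun _ => Metric.closedBall 0 R) (fun _ => hK)
    (fun t => ⟨h.hasDerivAt_prod t, mem_closedBall_zero_iff.mpr (hR t)⟩)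
    (fun t => ⟨h'.hasDerivAt_prod t, mem_closedBall_zero_iff.mpr (hR' t)⟩) (Prod.ext hx hdx)
  exact congrArg (fun γ t => (γ t).1) this

theorem comp_reflect (h : IsAutSol a x dx) (c : ℝ) :
    IsAutSol a (fun t => x (2 * c - t)) (fun t => -dx (2 * c - t)) := by
  have hr : ∀ t : ℝ, HasDerivAt (fun s => 2 * c - s) (-1) t := fun t => by
    simpa using (hasDerivAt_id t).const_sub (2 * c)
  refine ⟨fun t => ?_, fun t => ?_⟩
  · exact ((h.1 (2 * c - t)).comp t (hr t)).congr_deriv (by ring)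
  · exact ((h.2 (2 * c - t)).comp t (hr t)).neg.congr_deriv (by ring)

theorem reflect_eq_of_deriv_eq_zero {R c : ℝ} (h : IsAutSol a x dx)
    (hR : ∀ t, ‖(x t, dx t)‖ ≤ R) (hc : dx c = 0) (t : ℝ) : x (2 * c - t) = x t := by
  have hR' : ∀ t, ‖(x (2 * c - t), -dx (2 * c - t))‖ ≤ R := fun t => by
    simpa [Prod.norm_def] using hR (2 * c - t)
  refine congrFun ((h.comp_reflect c).unique h hR' hR (t₀ := c) ?_ ?_) t <;>
    simp [two_mul, hc]

/-- The reflections of time in two turning points `c₁`, `c₂` compose to the translation by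
`2 (c₂ - c₁)`. -/
theorem periodic_of_deriv_eq_zero {R c₁ c₂ : ℝ} (h : IsAutSol a x dx)
    (hR : ∀ t, ‖(x t, dx t)‖ ≤ R) (hc₁ : dx c₁ = 0) (hc₂ : dx c₂ = 0) :
    Function.Periodic x (2 * (c₂ - c₁)) := fun t => by
  rw [← h.reflect_eq_of_deriv_eq_zero hR hc₁ t, ← h.reflect_eq_of_deriv_eq_zero hR hc₂]
  ring_nf

theorem eq_zero_of_forall_eq (h : IsAutSol a x dx) (hx : ∀ t, x t = x 0) :
    x 0 * (x 0 - 1) * (x 0 - a) = 0 := by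
  have hdx : dx = fun _ => 0 := funext fun t =>
    (h.1 t).unique ((hasDerivAt_const t (x 0)).congr_of_eventuallyEq (.of_forall hx))
  exact (h.2 0).unique (hdx ▸ hasDerivAt_const 0 0)

theorem Fa_eq_and_eq_zero_of_tendsto {L : ℝ} (h : IsAutSol a x dx)
    (hL : Tendsto x atTop (𝓝 L)) :
    Fa a L = dx 0 ^ 2 / 2 + Fa a (x 0) ∧ L * (L - 1) * (L - a) = 0 := by
  set E := dx 0 ^ 2 / 2 + Fa a (x 0) with hE
  have hsq : Tendsto (fun t => dx t ^ 2) atTop (𝓝 (2 * (E - Fa a L))) := by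
    have hdx2 : (fun t => dx t ^ 2) = fun t => 2 * (E - Fa a (x t)) :=
      funext fun t => by linarith [h.energy_eq t, hE]
    rw [hdx2]
    exact (tendsto_const_nhds.sub (((continuous_Fa a).tendsto L).comp hL)).const_mul 2
  have hFL : Fa a L = E := by
    have := apply_zero_eq_of_tendsto_comp_deriv (φ := fun v => v ^ 2) h.1
      (continuous_pow 2).continuousAt hL hsq
    linarith
  have hdx : Tendsto dx atTop (𝓝 0) := by
    rw [tendsto_zero_iff_abs_tendsto_zero]
    simpa [Function.comp_def, Real.sqrt_sq_eq_abs, hFL] using hsq.sqrt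
  have hacc : Tendsto (fun t => x t * (x t - 1) * (x t - a)) atTop (𝓝 (L * (L - 1) * (L - a))) :=
    ((by fun_prop : Continuous fun v : ℝ => v * (v - 1) * (v - a)).tendsto L).comp hL
  exact ⟨hFL, (apply_zero_eq_of_tendsto_comp_deriv (φ := id) h.2 continuousAt_id hdx hacc).symm⟩

theorem exists_pos_deriv_eq_zero (h : IsAutSol a x dx) (ha : 0 < a) (hx0 : x 0 ∈ Ioo a 1)
    (hdx0 : dx 0 = 0) (hF0 : Fa a (x 0) < Fa a 0) (hF1 : Fa a (x 0) < Fa a 1) :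
    ∃ c, 0 < c ∧ dx c = 0 := by
  have hE : ∀ t, dx t ^ 2 / 2 + Fa a (x t) = Fa a (x 0) := fun t => by
    simpa [hdx0] using h.energy_eq t
  by_contra! hne
  have hacc : x 0 * (x 0 - 1) * (x 0 - a) < 0 :=
    mul_neg_of_neg_of_pos (mul_neg_of_pos_of_neg (ha.trans hx0.1) (by linarith [hx0.2]))
      (by linarith [hx0.1])
  have hneg : ∀ t, 0 < t → dx t < 0 := fun t =>
    (continuous_iff_continuousAt.mpr fun s => (h.2 s).continuousAt).neg_of_eventually_neg_of_ne_zero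
      (by simpa [hdx0] using (h.2 0).eventually_nhdsGT_lt hacc) hne
  obtain ⟨L, hL⟩ : ∃ L, Tendsto x atTop (𝓝 L) := by
    refine AntitoneOn.exists_tendsto_atTop (a := 0) (b := 0) ?_ fun t _ =>
      (mem_Ioo_of_energy_eq h.continuous hE ⟨ha.trans hx0.1, hx0.2⟩ hF0 hF1 t).1.le
    refine antitoneOn_of_deriv_nonpos (convex_Ici 0) h.continuous.continuousOn
      (fun t _ => (h.1 t).differentiableAt.differentiableWithinAt) fun t ht => ?_
    rw [interior_Ici] at ht
    exact (h.1 t).deriv ▸ (hneg t ht).le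
  obtain ⟨hFL, hrest⟩ := h.Fa_eq_and_eq_zero_of_tendsto hL
  rw [hdx0] at hFL
  rcases mul_eq_zero.mp hrest with hL01 | hLa
  · rcases mul_eq_zero.mp hL01 with hL0 | hL1
    · exact hF0.ne (by simpa [hL0] using hFL.symm)
    · exact hF1.ne (by simpa [sub_eq_zero.mp hL1] using hFL.symm)
  · have := strictMonoOn_Fa ha.le (left_mem_Icc.mpr (hx0.1.trans hx0.2).le)
      ⟨hx0.1.le, hx0.2.le⟩ hx0.1
    linarith [congrArg (Fa a) (sub_eq_zero.mp hLa)]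

end IsAutSol

/-- Solve first for the vector field cut off outside the ball of radius `2`: its energy is
still conserved, which keeps the orbit inside that ball, where the cut-off equals `1`. -/
theorem exists_isAutSol {a x₀ : ℝ} (h0 : 0 ≤ a) (h1 : a ≤ 1) (hx₀ : x₀ ∈ Ioo 0 1)
    (hF0 : Fa a x₀ < Fa a 0) (hF1 : Fa a x₀ < Fa a 1) :
    ∃ x dx : ℝ → ℝ, IsAutSol a x dx ∧ x 0 = x₀ ∧ dx 0 = 0 := by
  let ψ : ContDiffBump (0 : ℝ × ℝ) := ⟨2, 3, two_pos, by norm_num⟩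
  obtain ⟨γ, hγ0, hγ⟩ := exists_forall_hasDerivAt_of_hasCompactSupport
    (ψ.contDiff.smul (contDiff_vectorField a)) ψ.hasCompactSupport.smul_right (x₀, 0)
  have hx : ∀ t, HasDerivAt (fun t => (γ t).1) (ψ (γ t) * (γ t).2) t := fun t => by
    simpa [vectorField, Function.comp_def] using hasFDerivAt_fst.comp_hasDerivAt t (hγ t)
  have hy : ∀ t, HasDerivAt (fun t => (γ t).2)
      (ψ (γ t) * ((γ t).1 * ((γ t).1 - 1) * ((γ t).1 - a))) t := fun t => by
    simpa [vectorField, Function.comp_def] using hasFDerivAt_snd.comp_hasDerivAt t (hγ t)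
  have hE : ∀ t, (γ t).2 ^ 2 / 2 + Fa a (γ t).1 = Fa a (γ 0).1 := fun t => by
    simpa [hγ0] using energy_eq_of_hasDerivAt hx hy t
  have hψ : ∀ t, ψ (γ t) = 1 := fun t =>
    ψ.one_of_mem_closedBall <| mem_closedBall_zero_iff.mpr <|
      norm_le_two_of_energy_eq h0 h1 (continuous_iff_continuousAt.mpr fun t => (hx t).continuousAt)
        hE (by simpa [hγ0]) (by simpa [hγ0]) (by simpa [hγ0]) t
  refine ⟨fun t => (γ t).1, fun t => (γ t).2, ⟨fun t => ?_, fun t => ?_⟩, by simp [hγ0],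
    by simp [hγ0]⟩
  · simpa [hψ t] using hx t
  · simpa [hψ t] using hy t

theorem stmt_17_general (a x₀ : ℝ) (h0 : 0 < a)
    (hx₀ : x₀ ∈ Set.Ioo a 1) (hF : Fa a x₀ < min 0 ((1 - 2 * a) / 12)) :
    -- the solution with x(0) = x₀, x'(0) = 0 exists ...
    (∃ x dx : ℝ → ℝ, IsAutSol a x dx ∧ x 0 = x₀ ∧ dx 0 = 0) ∧
    -- ... and it is a nonconstant periodic solution
    (∀ x dx : ℝ → ℝ, IsAutSol a x dx → x 0 = x₀ → dx 0 = 0 →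
      (∃ T : ℝ, 0 < T ∧ Function.Periodic x T) ∧ (∃ t₁ t₂ : ℝ, x t₁ ≠ x t₂)) := by
  have h1 : a < 1 := hx₀.1.trans hx₀.2
  have hF0 : Fa a x₀ < Fa a 0 := by rw [Fa_zero]; exact hF.trans_le (min_le_left _ _)
  have hF1 : Fa a x₀ < Fa a 1 := by rw [Fa_one]; exact hF.trans_le (min_le_right _ _)
  have hx₀' : x₀ ∈ Ioo 0 1 := ⟨h0.trans hx₀.1, hx₀.2⟩
  refine ⟨exists_isAutSol h0.le h1.le hx₀' hF0 hF1, fun x dx h hx0 hdx0 => ?_⟩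
  subst hx0
  have hE : ∀ t, dx t ^ 2 / 2 + Fa a (x t) = Fa a (x 0) := fun t => by
    simpa [hdx0] using h.energy_eq t
  obtain ⟨c, hc, hdxc⟩ := h.exists_pos_deriv_eq_zero h0 hx₀ hdx0 hF0 hF1
  have hper := h.periodic_of_deriv_eq_zero
    (norm_le_two_of_energy_eq h0.le h1.le h.continuous hE hx₀' hF0 hF1) hdx0 hdxc
  rw [sub_zero] at hper
  refine ⟨⟨2 * c, by positivity, hper⟩, ?_⟩
  by_contra! hconst
  have hrest := h.eq_zero_of_forall_eq fun t => hconst t 0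
  have : 0 < x 0 * (1 - x 0) * (x 0 - a) :=
    mul_pos (mul_pos hx₀'.1 (sub_pos.mpr hx₀.2)) (sub_pos.mpr hx₀.1)
  linarith

theorem stmt_17 (a x₀ : ℝ) (h0 : 0 < a) (h1 : a < 1)
    (hx₀ : x₀ ∈ Set.Ioo a 1) (hF : Fa a x₀ < min 0 ((1 - 2 * a) / 12)) :
    -- the solution with x(0) = x₀, x'(0) = 0 exists ...
    (∃ x dx : ℝ → ℝ, IsAutSol a x dx ∧ x 0 = x₀ ∧ dx 0 = 0) ∧
    -- ... and it is a nonconstant periodic solution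
    (∀ x dx : ℝ → ℝ, IsAutSol a x dx → x 0 = x₀ → dx 0 = 0 →
      (∃ T : ℝ, 0 < T ∧ Function.Periodic x T) ∧ (∃ t₁ t₂ : ℝ, x t₁ ≠ x t₂)) :=
  stmt_17_general a x₀ h0 hx₀ hF
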